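/- Extending homeomorphic embedding with the rule $f(s_1,\ldots,s_m) \unlhd g(t_1,\ldots,t_n)$ whenever both $f$ and $g$ are 'dynamic' symbols yields a well-binary relation on terms, provided the set of static function symbols is finite (while the set of dynamic symbols may be infinite). -/

import Mathlib

/-- First-order terms over a signature `F` indexed by arity, with variables. -/
inductive Tm (F : ℕ → Type) : Type
  | var : ℕ → Tm F
  | app : (n : ℕ) → F n → (Fin n → Tm F) → Tm F

/-- Homeomorphic embedding extended for dynamic function symbols: the signature
is partitioned by a predicate `Dyn` into dynamic and static symbols, and
`f(s₁,…,sₘ) ⊴ g(t₁,…,tₙ)` holds whenever both `f` and `g` are dynamic. -/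
inductive EmbD {F : ℕ → Type} (Dyn : ∀ n, F n → Prop) : Tm F → Tm F → Prop
  | var (x y : ℕ) : EmbD Dyn (.var x) (.var y)
  | dive {s : Tm F} {n : ℕ} (f : F n) (ts : Fin n → Tm F) (i : Fin n) :
      EmbD Dyn s (ts i) → EmbD Dyn s (.app n f ts)
  | couple {n : ℕ} (f : F n) (ss ts : Fin n → Tm F) :
      ¬ Dyn n f → (∀ i, EmbD Dyn (ss i) (ts i)) →
      EmbD Dyn (.app n f ss) (.app n f ts)
  | dyn {m n : ℕ} (f : F m) (g : F n) (ss : Fin m → Tm F) (ts : Fin n → Tm F) :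
      Dyn m f → Dyn n g → EmbD Dyn (.app m f ss) (.app n g ts)

/-!
The extended embedding is not transitive (`x ⊴ g(x) ⊴ c` for dynamic `g` and `c`, but `x ⋬ c`),
so Higman's lemma cannot be applied to it directly. Instead, collapse every dynamic subterm to one
fresh constant `⋆`. Collapsed terms live over a finite signature, where the ordinary homeomorphic
embedding is a well-quasi-order by Kruskal's tree theorem, and an embedding between collapsed terms
lifts back to `⊴`, the rule `⋆ ⊴ ⋆` becoming the dynamic rule.

Kruskal's theorem is proved à la Nash-Williams: the arguments of the terms of a bad sequence that is
minimal for term size are well-quasi-ordered, hence so are their argument lists (Higman), and as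
there are finitely many head symbols two terms of the sequence share their head and have embedded
argument lists.
-/

open Set.PartiallyWellOrderedOn (IsBadSeq IsMinBadSeq)

namespace Tm

variable {F : ℕ → Type}

def size : Tm F → ℕ
  | var _ => 1
  | app _ _ ts => 1 + ∑ i, (ts i).size

def args : Tm F → List (Tm F)
  | var _ => []
  | app _ _ ts => List.ofFn ts

def head : Tm F → Option (Σ n, F n)
  | var _ => none
  | app n f _ => some ⟨n, f⟩

lemma size_lt_of_mem_args {s t : Tm F} (h : s ∈ t.args) : s.size < t.size := by
  cases t with
  | var => simp [args] at h
  | app n f ts =>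
    obtain ⟨i, rfl⟩ := List.mem_ofFn.1 h
    have := Finset.single_le_sum (fun j _ => Nat.zero_le (ts j).size) (Finset.mem_univ i)
    simp only [size]
    omega

end Tm

section EmbD

variable {F : ℕ → Type} {Dyn : ∀ n, F n → Prop}

lemma EmbD.refl (t : Tm F) : EmbD Dyn t t := by
  induction t with
  | var x => exact .var x x
  | app n f ts ih =>
    by_cases hf : Dyn n f
    · exact .dyn f f ts ts hf hf
    · exact .couple f ts ts hf ih

lemma EmbD.of_mem_args {s t u : Tm F} (hu : t ∈ u.args) (h : EmbD Dyn s t) : EmbD Dyn s u := by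
  cases u with
  | var => simp [Tm.args] at hu
  | app n f ts =>
    obtain ⟨i, rfl⟩ := List.mem_ofFn.1 hu
    exact .dive f ts i h

lemma partiallyWellOrderedOn_args_of_isMinBadSeq {f : ℕ → Tm F}
    (hbad : IsBadSeq (EmbD Dyn) Set.univ f)
    (hmin : ∀ n, IsMinBadSeq (EmbD Dyn) Tm.size Set.univ n f) :
    {s | ∃ n, s ∈ (f n).args}.PartiallyWellOrderedOn (EmbD Dyn) := by
  rw [Set.partiallyWellOrderedOn_iff_exists_lt]
  intro u hu
  choose N hN using hu
  by_contra! hubad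
  -- `f 0, …, f (M - 1), u k₀, u (k₀ + 1), …` is bad and smaller than `f` at `M`.
  set k₀ := Function.argmin N
  set M := N k₀
  set g : ℕ → Tm F := fun n => if n < M then f n else u (k₀ + (n - M))
  refine hmin M g (fun m hm => (if_pos hm).symm) ?_ ⟨fun _ => Set.mem_univ _, fun i j hij h => ?_⟩
  · simpa [g] using Tm.size_lt_of_mem_args (hN k₀)
  obtain hj | hj := lt_or_ge j M
  · simp only [g, if_pos hj, if_pos (hij.trans hj)] at h
    exact hbad.2 i j hij h
  obtain hi | hi := lt_or_ge i M
  · simp only [g, if_pos hi, if_neg (not_lt.2 hj)] at h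
    exact hbad.2 i _ (hi.trans_le (Function.argmin_le N _)) (h.of_mem_args (hN _))
  · simp only [g, if_neg (not_lt.2 hi), if_neg (not_lt.2 hj)] at h
    exact hubad _ _ (by omega) h

end EmbD

lemma List.SublistForall₂.forall₂_of_length_eq {α β : Type*} {R : α → β → Prop} {l₁ : List α}
    {l₂ : List β} (h : List.SublistForall₂ R l₁ l₂) (hlen : l₁.length = l₂.length) :
    List.Forall₂ R l₁ l₂ := by
  obtain ⟨l, hl₁, hl⟩ := List.sublistForall₂_iff.1 h
  rwa [← hl.eq_of_length (hl₁.length_eq.symm.trans hlen)]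

abbrev HomEmb {G : ℕ → Type} : Tm G → Tm G → Prop := EmbD fun _ _ => False

namespace HomEmb

variable {G : ℕ → Type}

lemma trans {s t u : Tm G} (h₁ : HomEmb s t) (h₂ : HomEmb t u) : HomEmb s u := by
  induction h₂ generalizing s with
  | var x y => cases h₁; exact .var _ y
  | dive f ts i _ ih => exact .dive f ts i (ih h₁)
  | couple f ss ts hf _ ih =>
    cases h₁ with
    | dive _ _ j h => exact .dive f ts j (ih j h)
    | couple _ _ _ _ h => exact .couple f _ ts hf fun i => ih i (h i)
    | dyn _ _ _ _ hf' => exact hf'.elim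
  | dyn _ _ _ _ hf => exact hf.elim

instance : IsPreorder (Tm G) HomEmb where
  refl := EmbD.refl
  trans _ _ _ := trans

lemma of_head_eq {s t : Tm G} (hhead : s.head = t.head)
    (hargs : List.SublistForall₂ HomEmb s.args t.args) : HomEmb s t := by
  cases s with
  | var x =>
    cases t with
    | var y => exact .var x y
    | app => simp [Tm.head] at hhead
  | app n f ss =>
    cases t with
    | var => simp [Tm.head] at hhead
    | app m g ts =>
      obtain ⟨rfl, hfg⟩ := Sigma.mk.inj_iff.1 (Option.some_injective _ hhead)
      obtain rfl := eq_of_heq hfg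
      simp only [Tm.args] at hargs
      have hpt := List.forall₂_iff_get.1 (hargs.forall₂_of_length_eq (by simp))
      exact .couple f ss ts not_false fun i => by simpa using hpt.2 i (by simp) (by simp)

theorem wellQuasiOrdered [Finite (Σ n, G n)] : WellQuasiOrdered (HomEmb (G := G)) := by
  rw [← Set.partiallyWellOrderedOn_univ_iff,
    Set.PartiallyWellOrderedOn.iff_not_exists_isMinBadSeq Tm.size]
  rintro ⟨f, hbad, hmin⟩
  have hargs :=
    (partiallyWellOrderedOn_args_of_isMinBadSeq hbad hmin).partiallyWellOrderedOn_sublistForall₂ _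
  have hheads := Set.partiallyWellOrderedOn_univ_iff.2
    (Finite.wellQuasiOrdered (α := Option (Σ n, G n)) (· = ·))
  obtain ⟨i, j, hij, hhead, hsub⟩ := (hheads.prod hargs).exists_lt
    (f := fun n => ((f n).head, (f n).args)) fun n => ⟨Set.mem_univ _, fun _ hs => ⟨n, hs⟩⟩
  exact hbad.2 i j hij (of_head_eq hhead hsub)

end HomEmb

section Collapse

variable {F : ℕ → Type} (Dyn : ∀ n, F n → Prop)

/-- The static symbols of `F` together with a fresh constant `⋆`, the summand `PLift (n = 0)`. -/
def CollapsedSig (n : ℕ) : Type := {f : F n // ¬ Dyn n f} ⊕ PLift (n = 0)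

lemma finite_collapsedSig (hstatic : Finite {s : Σ n, F n // ¬ Dyn s.1 s.2}) :
    Finite (Σ n, CollapsedSig Dyn n) := by
  have : Finite (Σ n, {f : F n // ¬ Dyn n f}) :=
    Finite.of_injective (fun p => (⟨⟨p.1, p.2.1⟩, p.2.2⟩ : {s : Σ n, F n // ¬ Dyn s.1 s.2}))
      fun ⟨_, _, _⟩ ⟨_, _, _⟩ h => by cases h; rfl
  have : Subsingleton (Σ n, PLift (n = 0)) := ⟨fun ⟨_, ⟨h⟩⟩ ⟨_, ⟨h'⟩⟩ => by subst h h'; rfl⟩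
  exact Finite.of_equiv _ (Equiv.sigmaSumDistrib _ _).symm

open Classical in
noncomputable def Tm.collapse : Tm F → Tm (CollapsedSig Dyn)
  | .var x => .var x
  | .app n f ts =>
    if h : Dyn n f then .app 0 (.inr ⟨rfl⟩) Fin.elim0
    else .app n (.inl ⟨f, h⟩) fun i => (ts i).collapse

variable {Dyn}

lemma Tm.collapse_app_of_dyn {n : ℕ} {f : F n} (ts : Fin n → Tm F) (hf : Dyn n f) :
    (Tm.app n f ts).collapse Dyn = .app 0 (.inr ⟨rfl⟩) Fin.elim0 := by
  simp [collapse, hf]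

lemma Tm.collapse_app_of_not_dyn {n : ℕ} {f : F n} (ts : Fin n → Tm F) (hf : ¬ Dyn n f) :
    (Tm.app n f ts).collapse Dyn = .app n (.inl ⟨f, hf⟩) fun i => (ts i).collapse Dyn := by
  simp [collapse, hf]

lemma Tm.collapse_eq_var {s : Tm F} {x : ℕ} (h : s.collapse Dyn = .var x) : s = .var x := by
  cases s with
  | var y => simpa [collapse] using h
  | app m f ss => by_cases hf : Dyn m f <;> simp [collapse, hf] at h

lemma Tm.collapse_eq_app_inr {s : Tm F} {e : PLift (0 = 0)} {cs : Fin 0 → Tm (CollapsedSig Dyn)}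
    (h : s.collapse Dyn = .app 0 (.inr e) cs) : ∃ m f ss, s = .app m f ss ∧ Dyn m f := by
  cases s with
  | var y => simp [collapse] at h
  | app m f ss =>
    by_cases hf : Dyn m f
    · exact ⟨m, f, ss, rfl, hf⟩
    · rw [collapse_app_of_not_dyn ss hf] at h
      cases h

lemma Tm.collapse_eq_app_inl {s : Tm F} {n : ℕ} {g : F n} {hg : ¬ Dyn n g}
    {cs : Fin n → Tm (CollapsedSig Dyn)} (h : s.collapse Dyn = .app n (.inl ⟨g, hg⟩) cs) :
    ∃ ss, s = .app n g ss ∧ cs = fun i => (ss i).collapse Dyn := by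
  cases s with
  | var y => simp [collapse] at h
  | app m f ss =>
    by_cases hf : Dyn m f
    · rw [collapse_app_of_dyn ss hf] at h
      cases h
    · rw [collapse_app_of_not_dyn ss hf] at h
      cases h
      exact ⟨ss, rfl, rfl⟩

lemma EmbD.of_homEmb_collapse {s t : Tm F} (h : HomEmb (s.collapse Dyn) (t.collapse Dyn)) :
    EmbD Dyn s t := by
  induction t generalizing s with
  | var y =>
    generalize hc : s.collapse Dyn = c at h
    cases h with
    | var x => rw [Tm.collapse_eq_var hc]; exact .var x y
  | app n g ts ih =>
    by_cases hg : Dyn n g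
    · rw [Tm.collapse_app_of_dyn ts hg] at h
      generalize hc : s.collapse Dyn = c at h
      cases h with
      | dive _ _ i => exact i.elim0
      | couple =>
        obtain ⟨m, f, ss, rfl, hf⟩ := Tm.collapse_eq_app_inr hc
        exact .dyn f g ss ts hf hg
      | dyn _ _ _ _ hf => exact hf.elim
    · rw [Tm.collapse_app_of_not_dyn ts hg] at h
      generalize hc : s.collapse Dyn = c at h
      cases h with
      | dive _ _ i h => exact .dive g ts i (ih i (hc ▸ h))
      | couple _ cs _ _ h =>
        obtain ⟨ss, rfl, rfl⟩ := Tm.collapse_eq_app_inl hc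
        exact .couple g ss ts hg fun i => ih i (h i)
      | dyn _ _ _ _ hf => exact hf.elim

end Collapse

/-- if the set of static function symbols is finite (while there
may be infinitely many dynamic symbols), the extended homeomorphic embedding is
a well-binary relation: every infinite sequence of terms contains `i < j` with
`t i ⊴ t j`. -/
theorem embD_wbr {F : ℕ → Type} (Dyn : ∀ n, F n → Prop)
    (hstatic : Finite {s : Σ n, F n // ¬ Dyn s.1 s.2}) :
    ∀ t : ℕ → Tm F, ∃ i j, i < j ∧ EmbD Dyn (t i) (t j) := by
  intro t
  have := finite_collapsedSig Dyn hstatic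
  obtain ⟨i, j, hij, h⟩ := HomEmb.wellQuasiOrdered fun k => (t k).collapse Dyn
  exact ⟨i, j, hij, .of_homEmb_collapse h⟩
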